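/- Let (g, φ) be a quadratic Lie algebra over a field K of characteristic zero. Then the socle (sum of all minimal nonzero ideals of g) and the Jacobson radical (intersection of all maximal proper ideals of g) are mutual orthogonal complements: (Soc g)^⊥ = J(g). -/

import Mathlib

/-!
For a nondegenerate symmetric invariant form, `I ↦ I^⊥` is an inclusion-reversing involution
of the lattice of ideals. Such an anti-automorphism sends the supremum of a family to the infimum
of the images and exchanges atoms (minimal nonzero ideals) with coatoms (maximal proper ideals).
-/

def perp {K L : Type*} [Field K] [AddCommGroup L] [Module K L]
    (φ : L →ₗ[K] L →ₗ[K] K) (U : Submodule K L) : Submodule K L where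
  carrier := {x | ∀ u ∈ U, φ x u = 0}
  add_mem' := by
    intro a b ha hb u hu
    simp [map_add, ha u hu, hb u hu]
  zero_mem' := by
    intro u hu
    simp
  smul_mem' := by
    intro c a ha u hu
    simp [map_smul, ha u hu]

theorem isAtom_iff_forall_le {α : Type*} [PartialOrder α] [OrderBot α] {a : α} :
    IsAtom a ↔ a ≠ ⊥ ∧ ∀ b ≤ a, b = ⊥ ∨ b = a :=
  ⟨fun h ↦ ⟨h.1, fun _ ↦ h.le_iff.mp⟩,
    fun h ↦ ⟨h.1, fun b hb ↦ (h.2 b hb.le).resolve_right hb.ne⟩⟩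

theorem isCoatom_iff_forall_ge {α : Type*} [PartialOrder α] [OrderTop α] {a : α} :
    IsCoatom a ↔ a ≠ ⊤ ∧ ∀ b, a ≤ b → b = a ∨ b = ⊤ := by
  rw [← isAtom_dual_iff_isCoatom, isAtom_iff_forall_le]
  exact and_congr Iff.rfl (forall_congr' fun _ ↦ imp_congr Iff.rfl or_comm)

theorem perp_eq_orthogonal {K L : Type*} [Field K] [AddCommGroup L] [Module K L]
    {φ : L →ₗ[K] L →ₗ[K] K} (hsymm : ∀ x y, φ x y = φ y x) (U : Submodule K L) :
    perp φ U = LinearMap.BilinForm.orthogonal φ U := by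
  ext x
  exact forall₂_congr fun u _ ↦ by rw [hsymm]

theorem LinearMap.BilinForm.lieInvariant_of_apply_lie_eq {K L : Type*} [CommRing K]
    [LieRing L] [LieAlgebra K L] {Φ : LinearMap.BilinForm K L} (h : ∀ x y z, Φ ⁅x, y⁆ z = Φ x ⁅y, z⁆) :
    Φ.lieInvariant L := fun x y z ↦ by
  rw [← lie_skew, map_neg, LinearMap.neg_apply, h]

namespace LieAlgebra.InvariantForm

variable {K L M : Type*} [Field K] [LieRing L]
  [AddCommGroup M] [Module K M] [LieRingModule L M]
  (Φ : LinearMap.BilinForm K M) (hΦ_inv : Φ.lieInvariant L)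

theorem orthogonal_antitone : Antitone (orthogonal Φ hΦ_inv) := fun _ _ h ↦ Φ.orthogonal_le h

variable [Module.Finite K M] {Φ} (hΦ_nondeg : Φ.Nondegenerate) (hΦ_refl : Φ.IsRefl)
include hΦ_nondeg hΦ_refl

theorem orthogonal_orthogonal (N : LieSubmodule K L M) :
    orthogonal Φ hΦ_inv (orthogonal Φ hΦ_inv N) = N :=
  LieSubmodule.toSubmodule_injective <| Φ.orthogonal_orthogonal hΦ_nondeg hΦ_refl _

def orthogonalOrderIso : LieSubmodule K L M ≃o (LieSubmodule K L M)ᵒᵈ where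
  toFun N := OrderDual.toDual (orthogonal Φ hΦ_inv N)
  invFun N := orthogonal Φ hΦ_inv (OrderDual.ofDual N)
  left_inv := orthogonal_orthogonal hΦ_inv hΦ_nondeg hΦ_refl
  right_inv := orthogonal_orthogonal hΦ_inv hΦ_nondeg hΦ_refl
  map_rel_iff' {N N'} := by
    change orthogonal Φ hΦ_inv N' ≤ orthogonal Φ hΦ_inv N ↔ N ≤ N'
    refine ⟨fun h ↦ ?_, fun h ↦ orthogonal_antitone Φ hΦ_inv h⟩
    simpa only [orthogonal_orthogonal hΦ_inv hΦ_nondeg hΦ_refl] using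
      orthogonal_antitone Φ hΦ_inv h

theorem orthogonal_sSup (S : Set (LieSubmodule K L M)) :
    orthogonal Φ hΦ_inv (sSup S) = sInf (orthogonal Φ hΦ_inv '' S) := by
  rw [sInf_image]
  exact (orthogonalOrderIso hΦ_inv hΦ_nondeg hΦ_refl).map_sSup S

theorem isAtom_orthogonal_iff {N : LieSubmodule K L M} :
    IsAtom (orthogonal Φ hΦ_inv N) ↔ IsCoatom N := by
  rw [← isAtom_dual_iff_isCoatom,
    ← (orthogonalOrderIso hΦ_inv hΦ_nondeg hΦ_refl).symm.isAtom_iff]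
  rfl

theorem image_orthogonal_setOf_isAtom :
    orthogonal Φ hΦ_inv '' {N : LieSubmodule K L M | IsAtom N} = {N | IsCoatom N} := by
  ext N
  constructor
  · rintro ⟨N', hN', rfl⟩
    rwa [Set.mem_ofPred_eq, ← isAtom_orthogonal_iff hΦ_inv hΦ_nondeg hΦ_refl,
      orthogonal_orthogonal hΦ_inv hΦ_nondeg hΦ_refl]
  · intro hN
    exact ⟨_, (isAtom_orthogonal_iff hΦ_inv hΦ_nondeg hΦ_refl).mpr hN,
      orthogonal_orthogonal hΦ_inv hΦ_nondeg hΦ_refl N⟩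

end LieAlgebra.InvariantForm

open LieAlgebra.InvariantForm

theorem perp_socle_eq_jacobson_radical_general
    {K : Type*} [Field K]
    {L : Type*} [LieRing L] [LieAlgebra K L] [FiniteDimensional K L]
    (φ : L →ₗ[K] L →ₗ[K] K)
    (hsymm : ∀ x y : L, φ x y = φ y x)
    (hnondeg : ∀ x : L, (∀ y : L, φ x y = 0) → x = 0)
    (hinv : ∀ x y z : L, φ ⁅x, y⁆ z = φ x ⁅y, z⁆) :
    perp φ (LieSubmodule.toSubmodule
        (sSup {I : LieIdeal K L | I ≠ ⊥ ∧ ∀ J : LieIdeal K L, J ≤ I → J = ⊥ ∨ J = I}))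
      = LieSubmodule.toSubmodule
          (sInf {M : LieIdeal K L | M ≠ ⊤ ∧ ∀ J : LieIdeal K L, M ≤ J → J = M ∨ J = ⊤}) := by
  have hrefl : φ.IsRefl := fun x y h ↦ (hsymm y x).trans h
  have hnd : φ.Nondegenerate := hrefl.nondegenerate_iff_separatingLeft.mpr hnondeg
  have hlie := LinearMap.BilinForm.lieInvariant_of_apply_lie_eq hinv
  simp_rw [← isAtom_iff_forall_le, ← isCoatom_iff_forall_ge]
  rw [perp_eq_orthogonal hsymm, ← orthogonal_toSubmodule φ hlie, orthogonal_sSup hlie hnd hrefl,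
    image_orthogonal_setOf_isAtom hlie hnd hrefl]

/-- In a quadratic Lie algebra, the socle (the sum of all minimal nonzero ideals) and the
Jacobson radical (the intersection of all maximal proper ideals) are mutual orthogonal
complements: `(Soc g)^⊥ = J(g)`. -/
theorem perp_socle_eq_jacobson_radical
    {K : Type*} [Field K] [CharZero K]
    {L : Type*} [LieRing L] [LieAlgebra K L] [FiniteDimensional K L]
    (φ : L →ₗ[K] L →ₗ[K] K)
    (hsymm : ∀ x y : L, φ x y = φ y x)
    (hnondeg : ∀ x : L, (∀ y : L, φ x y = 0) → x = 0)
    (hinv : ∀ x y z : L, φ ⁅x, y⁆ z = φ x ⁅y, z⁆) :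
    perp φ (LieSubmodule.toSubmodule
        (sSup {I : LieIdeal K L | I ≠ ⊥ ∧ ∀ J : LieIdeal K L, J ≤ I → J = ⊥ ∨ J = I}))
      = LieSubmodule.toSubmodule
          (sInf {M : LieIdeal K L | M ≠ ⊤ ∧ ∀ J : LieIdeal K L, M ≤ J → J = M ∨ J = ⊤}) :=
  perp_socle_eq_jacobson_radical_general φ hsymm hnondeg hinv
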